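/- For a strongly convex rational polyhedral cone σ, the set S_σ = σ̌ ∩ M is a finitely generated additive submonoid of the lattice M (Gordan's lemma). -/

import Mathlib

open Set Filter Topology Metric

noncomputable section

open Set Filter Topology Metric

noncomputable section

/-- Euclidean pairing on `Fin d → ℝ`. -/
def dotR {d : ℕ} (u v : Fin d → ℝ) : ℝ := ∑ i, u i * v i

/-- The cone generated by a finite set of rational vectors. -/
def coneOf {d : ℕ} (S : Finset (Fin d → ℚ)) : Set (Fin d → ℝ) :=
  {x | ∃ c : (Fin d → ℚ) → ℝ, (∀ s, 0 ≤ c s) ∧ x = ∑ s ∈ S, c s • (fun i => (s i : ℝ))}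

/-- A rational polyhedral cone. -/
def IsRatPolyhedralCone {d : ℕ} (σ : Set (Fin d → ℝ)) : Prop :=
  ∃ S : Finset (Fin d → ℚ), σ = coneOf S

/-- Strong convexity: `σ ∩ (−σ) ⊆ {0}`. -/
def StronglyConvexCone {d : ℕ} (σ : Set (Fin d → ℝ)) : Prop := σ ∩ (-σ) ⊆ {0}

/-- The polar (dual) cone. -/
def polarCone {d : ℕ} (σ : Set (Fin d → ℝ)) : Set (Fin d → ℝ) := {v | ∀ u ∈ σ, 0 ≤ dotR u v}

/-- The dimension of a cone: the dimension of its linear span. -/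
def coneDim {d : ℕ} (σ : Set (Fin d → ℝ)) : ℕ := Module.finrank ℝ (Submodule.span ℝ σ)

/-- Casting an integral lattice vector into `ℝ^d`. -/
def expCast {d : ℕ} (v : Fin d → ℤ) : Fin d → ℝ := fun i => (v i : ℝ)

/-- The Newton polygon of a Laurent datum `g` relative to a cone `C`:
the convex hull of `⋃_{v ∈ supp g} (v + C)`. -/
def NPoly {d : ℕ} (C : Set (Fin d → ℝ)) (g : (Fin d → ℤ) →₀ ℂ) : Set (Fin d → ℝ) :=
  convexHull ℝ (⋃ v ∈ g.support, (fun c => expCast v + c) '' C)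

/-- A face of a convex set, as an extreme subset. -/
def IsFaceOf {d : ℕ} (C Δ : Set (Fin d → ℝ)) : Prop := IsExtreme ℝ C Δ

open Classical in
/-- The part of `g` supported on a face `γ`. -/
def facePart {d : ℕ} (g : (Fin d → ℤ) →₀ ℂ) (γ : Set (Fin d → ℝ)) : (Fin d → ℤ) →₀ ℂ :=
  g.filter (fun v => expCast v ∈ γ)

/-- Evaluation of the Laurent polynomial associated to `g` on the torus. -/
def laurentEval {d : ℕ} (g : (Fin d → ℤ) →₀ ℂ) (x : Fin d → ℂ) : ℂ :=
  ∑ v ∈ g.support, g v * ∏ i, x i ^ (v i)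

/-- The `i`-th logarithmic derivative of the Laurent polynomial of `g`. -/
def laurentDeriv {d : ℕ} (g : (Fin d → ℤ) →₀ ℂ) (i : Fin d) (x : Fin d → ℂ) : ℂ :=
  ∑ v ∈ g.support, (v i : ℂ) * g v * ∏ j, x j ^ (v j)

/-- Non-degeneracy of `g` (w.r.t. the cone `σ`): for every compact face `γ` of the Newton
polygon, the hypersurface `{L(g_γ) = 0}` is smooth in the torus. -/
def NonDeg {d : ℕ} (σ : Set (Fin d → ℝ)) (g : (Fin d → ℤ) →₀ ℂ) : Prop :=
  ∀ γ : Set (Fin d → ℝ), γ.Nonempty → IsCompact γ →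
    IsExtreme ℝ (NPoly (polarCone σ) g) γ →
    ∀ x : Fin d → ℂ, (∀ i, x i ≠ 0) → laurentEval (facePart g γ) x = 0 →
      ∃ i, laurentDeriv (facePart g γ) i x ≠ 0

/-- The additive monoid `S_σ = σ̌ ∩ M` of lattice points of the polar cone. -/
def latticeMonoid {d : ℕ} (σ : Set (Fin d → ℝ)) : AddSubmonoid (Fin d → ℤ) where
  carrier := {v | expCast v ∈ polarCone σ}
  zero_mem' := by
    show expCast (0 : Fin d → ℤ) ∈ polarCone σ
    intro u hu
    simp [dotR, expCast]
  add_mem' := by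
    intro a b ha hb
    show expCast (a + b) ∈ polarCone σ
    intro u hu
    have h1 : 0 ≤ dotR u (expCast a) := ha u hu
    have h2 : 0 ≤ dotR u (expCast b) := hb u hu
    have key : dotR u (expCast (a + b)) = dotR u (expCast a) + dotR u (expCast b) := by
      simp only [dotR, expCast, Pi.add_apply, Int.cast_add, mul_add, Finset.sum_add_distrib]
    rw [key]
    exact add_nonneg h1 h2

/-! The lattice points `v` of the dual of the cone spanned by rational vectors `s₁, …, sₖ` are
cut out by integer inequalities `0 ≤ ⟨tⱼ, v⟩`, with `tⱼ` a positive multiple of `sⱼ`. Writing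
`v = v⁺ - v⁻` and adding slack variables `wⱼ = ⟨tⱼ, v⟩ ∈ ℕ` makes this monoid the image of the
monoid of solutions in `ℕ^(2d+k)` of a system of linear equations. Solution monoids are closed
under differences of comparable elements, so by Dickson's lemma they are generated by their finitely
many minimal nonzero elements. -/

theorem AddMonoidHom.eqLocusM_fg {M N : Type*} [AddCommMonoid M] [PartialOrder M]
    [WellQuasiOrderedLE M] [IsOrderedCancelAddMonoid M] [CanonicallyOrderedAdd M]
    [AddCancelCommMonoid N] (f g : M →+ N) : (f.eqLocusM g).FG :=
  AddSubmonoid.fg_of_subtractive fun x hx y hxy => by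
    rw [mem_eqLocusM, map_add, map_add, mem_eqLocusM.mp hx] at hxy
    exact add_left_cancel hxy

theorem AddSubmonoid.fg_comap_nonneg {ι κ : Type*} [Finite ι] [Finite κ]
    (A : (ι → ℤ) →+ (κ → ℤ)) : ((AddSubmonoid.nonneg (κ → ℤ)).comap A).FG := by
  let cast := Nat.castAddMonoidHom ℤ
  let diff : (ι → ℕ) × (ι → ℕ) × (κ → ℕ) →+ (ι → ℤ) :=
    (cast.compLeft ι).comp (AddMonoidHom.fst _ _) -
      (cast.compLeft ι).comp ((AddMonoidHom.fst _ _).comp (AddMonoidHom.snd _ _))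
  let slack : (ι → ℕ) × (ι → ℕ) × (κ → ℕ) →+ (κ → ℤ) :=
    (cast.compLeft κ).comp ((AddMonoidHom.snd _ _).comp (AddMonoidHom.snd _ _))
  suffices h : (AddSubmonoid.nonneg (κ → ℤ)).comap A = ((A.comp diff).eqLocusM slack).map diff by
    rw [h]
    exact ((A.comp diff).eqLocusM_fg slack).map diff
  ext v
  simp only [mem_comap, mem_nonneg, mem_map, AddMonoidHom.mem_eqLocusM, AddMonoidHom.comp_apply]
  constructor
  · intro hv
    have hdiff : diff (fun i => (v i).toNat, fun i => (-v i).toNat, fun j => (A v j).toNat) = v :=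
      funext fun i => Int.toNat_sub_toNat_neg (v i)
    refine ⟨_, ?_, hdiff⟩
    rw [hdiff]
    exact funext fun j => (Int.toNat_of_nonneg (hv j)).symm
  · rintro ⟨u, hu, rfl⟩
    rw [hu]
    exact fun j => Int.natCast_nonneg _

theorem exists_pos_nat_mul_eq_intCast {ι : Type*} [Fintype ι] (s : ι → ℚ) :
    ∃ n : ℕ, 0 < n ∧ ∃ t : ι → ℤ, ∀ i, (t i : ℚ) = n * s i := by
  refine ⟨∏ j, (s j).den, Finset.prod_pos fun j _ => (s j).pos,
    fun i => ((∏ j, (s j).den) / (s i).den : ℕ) * (s i).num, fun i => ?_⟩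
  have hden : ((s i).den : ℚ) ≠ 0 := Nat.cast_ne_zero.mpr (s i).den_nz
  rw [Int.cast_mul, Int.cast_natCast, ← Rat.mul_den_eq_num,
    Nat.cast_div (Finset.dvd_prod_of_mem _ (Finset.mem_univ i)) hden]
  field_simp

theorem mem_polarCone_coneOf {d : ℕ} (S : Finset (Fin d → ℚ)) (x : Fin d → ℝ) :
    x ∈ polarCone (coneOf S) ↔ ∀ s ∈ S, 0 ≤ dotR (fun i => (s i : ℝ)) x := by
  constructor
  · intro hx s hs
    have hsingle : (0 : (Fin d → ℚ) → ℝ) ≤ Pi.single s 1 := Pi.single_nonneg.mpr zero_le_one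
    refine hx _ ⟨Pi.single s 1, hsingle, ?_⟩
    simp [Pi.single_apply, ite_smul, hs]
  · rintro hx u ⟨c, hc, rfl⟩
    change 0 ≤ (∑ s ∈ S, c s • fun i => (s i : ℝ)) ⬝ᵥ x
    rw [sum_dotProduct]
    exact Finset.sum_nonneg fun s hs => by
      rw [smul_dotProduct]
      exact smul_nonneg (hc s) (hx s hs)

theorem dotR_nonneg_iff_of_intCast_eq_mul {d : ℕ} {s : Fin d → ℚ} {n : ℕ} (hn : 0 < n)
    {t : Fin d → ℤ} (ht : ∀ i, (t i : ℚ) = n * s i) (v : Fin d → ℤ) :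
    0 ≤ dotR (fun i => (s i : ℝ)) (expCast v) ↔ 0 ≤ t ⬝ᵥ v := by
  have hdot : ((t ⬝ᵥ v : ℤ) : ℝ) = n * dotR (fun i => (s i : ℝ)) (expCast v) := by
    simp only [dotProduct, dotR, expCast, Int.cast_sum, Int.cast_mul, Finset.mul_sum]
    refine Finset.sum_congr rfl fun i _ => ?_
    rw [show (t i : ℝ) = n * s i by exact_mod_cast ht i]
    ring
  rw [← Int.cast_nonneg_iff (R := ℝ), hdot, mul_nonneg_iff_of_pos_left (by exact_mod_cast hn)]

theorem gordan_lemma_general (d : ℕ) (σ : Set (Fin d → ℝ))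
    (hpoly : IsRatPolyhedralCone σ) :
    (latticeMonoid σ).FG := by
  obtain ⟨S, rfl⟩ := hpoly
  choose n hn t ht using fun s : S => exists_pos_nat_mul_eq_intCast s.1
  suffices h : latticeMonoid (coneOf S) =
      (AddSubmonoid.nonneg (S → ℤ)).comap (Matrix.of t).mulVecLin.toAddMonoidHom by
    rw [h]
    exact AddSubmonoid.fg_comap_nonneg _
  ext v
  change expCast v ∈ polarCone (coneOf S) ↔ ∀ s, 0 ≤ t s ⬝ᵥ v
  have hsign (s : S) := dotR_nonneg_iff_of_intCast_eq_mul (hn s) (ht s) v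
  rw [mem_polarCone_coneOf]
  exact ⟨fun h s => (hsign s).mp (h s s.2), fun h s hs => (hsign ⟨s, hs⟩).mpr (h _)⟩

/-- **Gordan's lemma.** For a strongly convex rational polyhedral cone `σ`,
the monoid `S_σ = σ̌ ∩ M` is a finitely generated additive submonoid of the lattice. -/
theorem gordan_lemma (d : ℕ) (σ : Set (Fin d → ℝ))
    (hpoly : IsRatPolyhedralCone σ) (hsc : StronglyConvexCone σ) :
    (latticeMonoid σ).FG :=
  gordan_lemma_general d σ hpoly
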